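/- arXiv:math/9903065 — 2 statements merged into one kernel-verified Lean document; each statement's English description precedes it below -/
import Mathlib

section
/- The Lie algebra L(α,β) with basis (H, A, B, E) and relations [H,E]=E, [H,A]=αA, [H,B]=βB, [A,B]=E, [E,A]=[E,B]=0 (α+β=1) is Frobenius: the linear functional g* sending E ↦ 1 and H, A, B ↦ 0 gives a nondegenerate bilinear form b(x,y) = g*([x,y]). -/
noncomputable section

/-- The bracket on ℝ⁴ (coordinates ordered as H, A, B, E) of the Lie algebra L(α,β). -/
def brL (α β : ℝ) (x y : Fin 4 → ℝ) : Fin 4 → ℝ :=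
  ![0,
    α * (x 0 * y 1 - y 0 * x 1),
    β * (x 0 * y 2 - y 0 * x 2),
    (x 0 * y 3 - y 0 * x 3) + (x 1 * y 2 - y 1 * x 2)]

/-- L(α,β) is Frobenius: the functional g* = "coefficient of E"
(E ↦ 1, H, A, B ↦ 0) makes b(x,y) = g*([x,y]) nondegenerate. -/
theorem stmt3 (α β : ℝ) (h : α + β = 1) :
    ∀ x : Fin 4 → ℝ, (∀ y : Fin 4 → ℝ, brL α β x y 3 = 0) → x = 0 := by
  intro x hx
  have h1 := hx ![1,0,0,0]
  have h2 := hx ![0,1,0,0]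
  have h3 := hx ![0,0,1,0]
  have h4 := hx ![0,0,0,1]
  simp [brL] at h1 h2 h3 h4
  funext i
  fin_cases i <;> simp [h1, h2, h3, h4] <;> linarith
end
end

section
/- The element r = E₂₃ ⊗ E₁₂ − E₁₂ ⊗ E₂₃ + (1/3)(E₁₃ ⊗ (E₁₁ + E₂₂ − 2E₃₃) − (E₁₁ + E₂₂ − 2E₃₃) ⊗ E₁₃) of sl(3) ⊗ sl(3) satisfies the classical Yang–Baxter equation [r₁₂, r₁₃] + [r₁₂, r₂₃] + [r₁₃, r₂₃] = 0. -/
noncomputable section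

open Matrix Kronecker

abbrev M3 := Matrix (Fin 3) (Fin 3) ℝ

def Eij (i j : Fin 3) : M3 := Matrix.single i j 1

/-- W = E₁₁ + E₂₂ − 2E₃₃. -/
def W : M3 := Eij 0 0 + Eij 1 1 - (2 : ℝ) • Eij 2 2

/-- Triple Kronecker product realizing a ⊗ b ⊗ c in M₃(ℝ)^{⊗3}. -/
def T3 (a b c : M3) : Matrix ((Fin 3 × Fin 3) × Fin 3) ((Fin 3 × Fin 3) × Fin 3) ℝ :=
  (a ⊗ₖ b) ⊗ₖ c

/-- r₁₂ for r = E₂₃ ⊗ E₁₂ − E₁₂ ⊗ E₂₃ + (1/3)(E₁₃ ⊗ W − W ⊗ E₁₃). -/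
def r12 : Matrix ((Fin 3 × Fin 3) × Fin 3) ((Fin 3 × Fin 3) × Fin 3) ℝ :=
  T3 (Eij 1 2) (Eij 0 1) 1 - T3 (Eij 0 1) (Eij 1 2) 1
    + (1/3 : ℝ) • (T3 (Eij 0 2) W 1 - T3 W (Eij 0 2) 1)

def r13 : Matrix ((Fin 3 × Fin 3) × Fin 3) ((Fin 3 × Fin 3) × Fin 3) ℝ :=
  T3 (Eij 1 2) 1 (Eij 0 1) - T3 (Eij 0 1) 1 (Eij 1 2)
    + (1/3 : ℝ) • (T3 (Eij 0 2) 1 W - T3 W 1 (Eij 0 2))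

def r23 : Matrix ((Fin 3 × Fin 3) × Fin 3) ((Fin 3 × Fin 3) × Fin 3) ℝ :=
  T3 1 (Eij 1 2) (Eij 0 1) - T3 1 (Eij 0 1) (Eij 1 2)
    + (1/3 : ℝ) • (T3 1 (Eij 0 2) W - T3 1 W (Eij 0 2))

namespace CYBEaux

lemma T3_mul (a b c d e f : M3) : T3 a b c * T3 d e f = T3 (a * d) (b * e) (c * f) := by
  simp [T3, Matrix.mul_kronecker_mul]

-- multiplication table for the atoms A = E01, B = E12, C = E02, W
lemma mul_tab (i j : Fin 3) : ∀ k l : Fin 3,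
    Eij i j * Eij k l = if j = k then Eij i l else 0 := by
  intro k l
  by_cases h : j = k
  · subst h; simpa [Eij] using Matrix.single_mul_single_same (α := ℝ) 1 i j l 1
  · simpa [Eij, h] using (Matrix.single_mul_single_of_ne (1:ℝ) i j k h 1 : Matrix.single i j (1:ℝ) * Matrix.single k l 1 = 0)

lemma m1 : Eij 0 1 * Eij 0 1 = 0 := by simpa using mul_tab 0 1 0 1
lemma m2 : Eij 0 1 * Eij 1 2 = Eij 0 2 := by simpa using mul_tab 0 1 1 2
lemma m3 : Eij 0 1 * Eij 0 2 = 0 := by simpa using mul_tab 0 1 0 2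
lemma m4 : Eij 1 2 * Eij 0 1 = 0 := by simpa using mul_tab 1 2 0 1
lemma m5 : Eij 1 2 * Eij 1 2 = 0 := by simpa using mul_tab 1 2 1 2
lemma m6 : Eij 1 2 * Eij 0 2 = 0 := by simpa using mul_tab 1 2 0 2
lemma m7 : Eij 0 2 * Eij 0 1 = 0 := by simpa using mul_tab 0 2 0 1
lemma m8 : Eij 0 2 * Eij 1 2 = 0 := by simpa using mul_tab 0 2 1 2
lemma m9 : Eij 0 2 * Eij 0 2 = 0 := by simpa using mul_tab 0 2 0 2

lemma W_mul (k l : Fin 3) :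
    W * Eij k l = (if k = 2 then (-2 : ℝ) else 1) • Eij k l := by
  fin_cases k <;>
    simp [W, add_mul, sub_mul, smul_mul_assoc, mul_tab] <;> {
      first
      | rfl
      | simp [two_smul] }

lemma mul_W (k l : Fin 3) :
    Eij k l * W = (if l = 2 then (-2 : ℝ) else 1) • Eij k l := by
  fin_cases l <;>
    simp [W, mul_add, mul_sub, mul_smul_comm, mul_tab] <;> {
      first
      | rfl
      | simp [two_smul] }

lemma w1 : W * Eij 0 1 = Eij 0 1 := by simpa using W_mul 0 1
lemma w2 : Eij 0 1 * W = Eij 0 1 := by simpa using mul_W 0 1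
lemma w3 : W * Eij 1 2 = Eij 1 2 := by simpa using W_mul 1 2
lemma w4 : Eij 1 2 * W = (-2 : ℝ) • Eij 1 2 := by simpa using mul_W 1 2
lemma w5 : W * Eij 0 2 = Eij 0 2 := by simpa using W_mul 0 2
lemma w6 : Eij 0 2 * W = (-2 : ℝ) • Eij 0 2 := by simpa using mul_W 0 2

lemma T3_zero₁ (b c : M3) : T3 0 b c = 0 := by simp [T3]
lemma T3_zero₂ (a c : M3) : T3 a 0 c = 0 := by simp [T3]
lemma T3_zero₃ (a b : M3) : T3 a b 0 = 0 := by simp [T3]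

lemma T3_smul₁ (t : ℝ) (a b c : M3) : T3 (t • a) b c = t • T3 a b c := by
  simp [T3, Matrix.smul_kronecker]
lemma T3_smul₂ (t : ℝ) (a b c : M3) : T3 a (t • b) c = t • T3 a b c := by
  simp [T3, Matrix.smul_kronecker, Matrix.kronecker_smul]
lemma T3_smul₃ (t : ℝ) (a b c : M3) : T3 a b (t • c) = t • T3 a b c := by
  simp [T3, Matrix.kronecker_smul]

end CYBEaux

open CYBEaux in
/-- the peripheric r-matrix satisfies the classical Yang–Baxter equation. -/
theorem stmt6 : ⁅r12, r13⁆ + ⁅r12, r23⁆ + ⁅r13, r23⁆ = 0 := by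
  simp only [Ring.lie_def, r12, r13, r23, sub_mul, mul_sub, add_mul, mul_add,
    smul_mul_assoc, mul_smul_comm, T3_mul, one_mul, mul_one,
    m1, m2, m3, m4, m5, m6, m7, m8, m9, w1, w2, w3, w4, w5, w6,
    T3_zero₁, T3_zero₂, T3_zero₃, T3_smul₁, T3_smul₂, T3_smul₃,
    smul_zero, zero_sub, sub_zero, zero_add, add_zero, smul_neg, neg_neg, smul_smul]
  module
end
end
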